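/- If (i,j) ≥ (0,0) and (k,l) ≥ (0,0) in the lexicographic-from-the-right order on ℤ², then the set product (I·η^{(1)}_{i,j}·I)·(I·η^{(2)}_{k,l}·I) equals the single double coset I·η^{(2)}_{i+k, j+l}·I, where η^{(1)}_{m,n} = diag(t1^m t2^n, t1^{-m} t2^{-n}) and η^{(2)}_{m,n} = (0, t1^m t2^n; -t1^{-m} t2^{-n}, 0). -/

import Mathlib

noncomputable section

/-- The 2-dimensional local field `F = 𝔽_q((t1))((t2))` (iterated Laurent series). -/
abbrev F2 (Fq : Type) [Field Fq] : Type := LaurentSeries (LaurentSeries Fq)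

variable (Fq : Type) [Field Fq] [Fintype Fq]

/-- The local parameter `t1`. -/
def t1 : F2 Fq := HahnSeries.single 0 (HahnSeries.single 1 1)

/-- The local parameter `t2`. -/
def t2 : F2 Fq := HahnSeries.single 1 1

/-- The rank-two valuation `v(x) = (v1 x, v2 x)` of a nonzero `x` (junk value at `0`):
`v2 x` is the `t2`-adic order of `x`, and `v1 x` is the `t1`-adic order of the leading
`t2`-coefficient of `x`. -/
def vv (x : F2 Fq) : ℤ × ℤ := ((x.coeff x.order).order, x.order)

/-- The lexicographic-from-the-right (non-strict) order on `ℤ²`. -/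
def lexle (a b : ℤ × ℤ) : Prop := a.2 < b.2 ∨ (a.2 = b.2 ∧ a.1 ≤ b.1)

/-- The lexicographic-from-the-right strict order on `ℤ²`. -/
def lexlt (a b : ℤ × ℤ) : Prop := a.2 < b.2 ∨ (a.2 = b.2 ∧ a.1 < b.1)

/-- `v(x) ≤ v(y)`, with the convention `v(0) = ∞`. -/
def vle (x y : F2 Fq) : Prop := x ≠ 0 ∧ (y = 0 ∨ lexle (vv Fq x) (vv Fq y))

/-- `v(x) < v(y)`, with the convention `v(0) = ∞`. -/
def vlt (x y : F2 Fq) : Prop := x ≠ 0 ∧ (y = 0 ∨ lexlt (vv Fq x) (vv Fq y))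

/-- The rank-two valuation ring `O` of `F`. -/
def Oring : Set (F2 Fq) := {x | x = 0 ∨ lexle (0, 0) (vv Fq x)}

/-- `SL₂(F)` as the set of 2×2 matrices of determinant 1. -/
def SL2 : Set (Matrix (Fin 2) (Fin 2) (F2 Fq)) := {g | g.det = 1}

/-- The (double) Iwahori subgroup `I ⊆ SL₂(O)`: entries in `O`, lower-left entry in `t1·O`. -/
def Iwahori : Set (Matrix (Fin 2) (Fin 2) (F2 Fq)) :=
  {g | g.det = 1 ∧ (∀ i j, g i j ∈ Oring Fq) ∧ ∃ y ∈ Oring Fq, g 1 0 = t1 Fq * y}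

/-- The matrix `η^{(1)}_{i,j} = diag(t1^i t2^j, t1^{-i} t2^{-j})`. -/
def eta1 (i j : ℤ) : Matrix (Fin 2) (Fin 2) (F2 Fq) :=
  !![t1 Fq ^ i * t2 Fq ^ j, 0; 0, t1 Fq ^ (-i) * t2 Fq ^ (-j)]

/-- The matrix `η^{(2)}_{i,j} = (0, t1^i t2^j; -t1^{-i} t2^{-j}, 0)`. -/
def eta2 (i j : ℤ) : Matrix (Fin 2) (Fin 2) (F2 Fq) :=
  !![0, t1 Fq ^ i * t2 Fq ^ j; -(t1 Fq ^ (-i) * t2 Fq ^ (-j)), 0]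

/-- The double coset `I·η·I`. -/
def doubleCoset (η : Matrix (Fin 2) (Fin 2) (F2 Fq)) : Set (Matrix (Fin 2) (Fin 2) (F2 Fq)) :=
  {x | ∃ g ∈ Iwahori Fq, ∃ h ∈ Iwahori Fq, x = g * η * h}

/-- The right coset `I·z`. -/
def rcoset (z : Matrix (Fin 2) (Fin 2) (F2 Fq)) : Set (Matrix (Fin 2) (Fin 2) (F2 Fq)) :=
  {x | ∃ g ∈ Iwahori Fq, x = g * z}
lemma IwAux.gen_id {C : Type*} [CommRing C] (p1 p2 q1 q2 r1 r2 s1 s2 a b c d D : C)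
    (h1 : p1 * q1 = 1) (h2 : p2 * q2 = 1) (h3 : r1 * s1 = 1) (h4 : r2 * s2 = 1)
    (h5 : d * D = 1) (h6 : a * d - b * c = 1) :
    !![p1 * p2, 0; 0, q1 * q2] * !![a, b; c, d] * !![0, r1 * r2; -(s1 * s2), 0] =
      !![D, p1 * p2 * (p1 * p2) * b; 0, d] *
        !![0, p1 * r1 * (p2 * r2); -(q1 * s1 * (q2 * s2)), 0] *
        !![1, -(r1 * r2 * (r1 * r2) * (c * D)); 0, 1] := by
  ext i' j'
  fin_cases i' <;> fin_cases j' <;>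
    simp [Matrix.mul_apply, Fin.sum_univ_two]
  · linear_combination (-(p1*p2*b*s1*s2*p2*q2)) * h1 + (-(p1*p2*b*s1*s2)) * h2
  · linear_combination (-(p1*p2*r1*r2*b*c*D*p2*q2*r1*s1*r2*s2)) * h1 +
      (-(p1*p2*r1*r2*b*c*D*r1*s1*r2*s2)) * h2 + (-(p1*p2*r1*r2*b*c*D*r2*s2)) * h3 +
      (-(p1*p2*r1*r2*b*c*D)) * h4 + (-(p1*p2*r1*r2*a)) * h5 + (p1*p2*r1*r2*D) * h6
  · ring
  · linear_combination (-(q1*q2*c*r1*r2*d*D*r2*s2)) * h3 + (-(q1*q2*c*r1*r2*d*D)) * h4 +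
      (-(q1*q2*c*r1*r2)) * h5

lemma IwAux.gen_id2 {C : Type*} [CommRing C] (p1 p2 q1 q2 r1 r2 s1 s2 : C) :
    !![p1 * p2, 0; 0, q1 * q2] * !![0, r1 * r2; -(s1 * s2), 0] =
      !![0, p1 * r1 * (p2 * r2); -(q1 * s1 * (q2 * s2)), 0] := by
  ext i' j'
  fin_cases i' <;> fin_cases j' <;>
    simp [Matrix.mul_apply, Fin.sum_univ_two] <;> ring

lemma IwAux.det_aux {C : Type*} [CommRing C] (u v w : C) (h : u * v = 1) :
    Matrix.det !![u, w; 0, v] = 1 := by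
  rw [Matrix.det_fin_two_of]
  linear_combination h

lemma IwAux.regroup {M : Type*} [Monoid M] (g1 E1 h1 g2 E2 h2 A W B : M)
    (hEq : E1 * (h1 * g2) * E2 = A * W * B) :
    g1 * E1 * h1 * (g2 * E2 * h2) = g1 * A * W * (B * h2) := by
  have e : g1 * E1 * h1 * (g2 * E2 * h2) = g1 * (E1 * (h1 * g2) * E2) * h2 := by
    simp only [mul_assoc]
  rw [e, hEq]
  simp only [mul_assoc]

lemma IwAux.regroup2 {M : Type*} [Monoid M] (g E1 E2 h W : M) (hW : E1 * E2 = W) :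
    g * E1 * 1 * (1 * E2 * h) = g * W * h := by
  rw [mul_one, one_mul, ← hW]
  simp only [mul_assoc]
section Aux

open HahnSeries

variable {R : Type*} [Field R]

lemma IwAux.coeff_order_ne_zero {Γ S : Type*} [Zero Γ] [LinearOrder Γ] [Zero S]
    {x : HahnSeries Γ S} (hx : x ≠ 0) : x.coeff x.order ≠ 0 := by
  rw [← HahnSeries.leadingCoeff_eq]
  exact HahnSeries.leadingCoeff_ne_zero.mpr hx

lemma IwAux.one_coeff_zero : (1 : LaurentSeries R).coeff 0 = 1 := by
  rw [← HahnSeries.single_zero_one, HahnSeries.coeff_single_same]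

lemma IwAux.one_coeff_ne {n : ℤ} (hn : n ≠ 0) : (1 : LaurentSeries R).coeff n = 0 := by
  rw [← HahnSeries.single_zero_one, HahnSeries.coeff_single_of_ne hn]

lemma IwAux.order_nonneg {x : LaurentSeries R} (hx : x ≠ 0)
    (h : ∀ n < (0 : ℤ), x.coeff n = 0) : 0 ≤ x.order := by
  by_contra hc
  push_neg at hc
  exact IwAux.coeff_order_ne_zero hx (h _ hc)

lemma IwAux.one_add_aux {w : LaurentSeries R} (hw : ∀ n ≤ (0 : ℤ), w.coeff n = 0) :
    (1 + w) ≠ 0 ∧ (1 + w).order = 0 ∧ (1 + w).coeff 0 = 1 := by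
  have h0 : (1 + w).coeff 0 = 1 := by
    rw [HahnSeries.coeff_add, IwAux.one_coeff_zero, hw 0 le_rfl, add_zero]
  have hne : (1 : LaurentSeries R) + w ≠ 0 := by
    intro h
    rw [h] at h0
    simp at h0
  refine ⟨hne, le_antisymm (HahnSeries.order_le_of_coeff_ne_zero
    (by rw [h0]; exact one_ne_zero)) ?_, h0⟩
  refine IwAux.order_nonneg hne fun n hn => ?_
  rw [HahnSeries.coeff_add, IwAux.one_coeff_ne hn.ne, hw n hn.le, add_zero]

lemma IwAux.single_npow (n : ℕ) :
    (HahnSeries.single (1 : ℤ) (1 : R) : LaurentSeries R) ^ n = HahnSeries.single (n : ℤ) 1 := by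
  induction n with
  | zero => simpa using (HahnSeries.single_zero_one).symm
  | succ m ih =>
      rw [pow_succ, ih, HahnSeries.single_mul_single, mul_one]
      norm_num

lemma IwAux.single_zpow (n : ℤ) :
    (HahnSeries.single (1 : ℤ) (1 : R) : LaurentSeries R) ^ n = HahnSeries.single n 1 := by
  cases n with
  | ofNat m => rw [Int.ofNat_eq_natCast, zpow_natCast, IwAux.single_npow]
  | negSucc m =>
      rw [zpow_negSucc, IwAux.single_npow]
      apply inv_eq_of_mul_eq_one_left
      rw [HahnSeries.single_mul_single, one_mul,
        show Int.negSucc m + ((m + 1 : ℕ) : ℤ) = 0 by rw [Int.negSucc_eq]; push_cast; ring]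
      exact HahnSeries.single_zero_one

end Aux
section Aux2

variable (Fq : Type) [Field Fq] [Fintype Fq]

set_option maxHeartbeats 1000000
set_option linter.unusedSectionVars false

lemma IwAux.t1_ne_zero : t1 Fq ≠ 0 :=
  HahnSeries.single_ne_zero (HahnSeries.single_ne_zero one_ne_zero)

lemma IwAux.t2_ne_zero : t2 Fq ≠ 0 := HahnSeries.single_ne_zero one_ne_zero

lemma IwAux.vv_one : vv Fq 1 = (0, 0) := by
  unfold vv
  rw [HahnSeries.order_one, IwAux.one_coeff_zero, HahnSeries.order_one]

lemma IwAux.vv_mul {x y : F2 Fq} (hx : x ≠ 0) (hy : y ≠ 0) :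
    vv Fq (x * y) = vv Fq x + vv Fq y := by
  have hx' := IwAux.coeff_order_ne_zero hx
  have hy' := IwAux.coeff_order_ne_zero hy
  have ho : (x * y).order = x.order + y.order := HahnSeries.order_mul hx hy
  have hc : (x * y).coeff (x.order + y.order) = x.coeff x.order * y.coeff y.order := by
    rw [HahnSeries.coeff_mul_order_add_order, HahnSeries.leadingCoeff_eq,
      HahnSeries.leadingCoeff_eq]
  unfold vv
  rw [Prod.mk_add_mk, ho, hc, HahnSeries.order_mul hx' hy']

lemma IwAux.vv_neg (x : F2 Fq) : vv Fq (-x) = vv Fq x := by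
  unfold vv
  rw [HahnSeries.order_neg, HahnSeries.coeff_neg, HahnSeries.order_neg]

lemma IwAux.t1_npow (n : ℕ) : t1 Fq ^ n = HahnSeries.single 0 (HahnSeries.single (n : ℤ) 1) := by
  induction n with
  | zero =>
      rw [pow_zero, show ((0:ℕ):ℤ) = 0 from rfl]
      rw [HahnSeries.single_zero_one, HahnSeries.single_zero_one]
  | succ m ih =>
      rw [pow_succ, ih, show t1 Fq = HahnSeries.single (0:ℤ) (HahnSeries.single (1:ℤ) (1:Fq)) from rfl,
        HahnSeries.single_mul_single, HahnSeries.single_mul_single, mul_one, add_zero]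
      norm_num

lemma IwAux.t1_zpow (n : ℤ) : t1 Fq ^ n = HahnSeries.single 0 (HahnSeries.single n 1) := by
  cases n with
  | ofNat m => rw [Int.ofNat_eq_natCast, zpow_natCast, IwAux.t1_npow]
  | negSucc m =>
      rw [zpow_negSucc, IwAux.t1_npow]
      have hmul : HahnSeries.single (0:ℤ) (HahnSeries.single (Int.negSucc m) (1:Fq)) *
          HahnSeries.single 0 (HahnSeries.single ((m + 1 : ℕ) : ℤ) 1) = 1 := by
        rw [HahnSeries.single_mul_single, HahnSeries.single_mul_single, one_mul, add_zero,
          show Int.negSucc m + ((m + 1 : ℕ) : ℤ) = 0 by rw [Int.negSucc_eq]; push_cast; ring,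
          HahnSeries.single_zero_one, HahnSeries.single_zero_one]
      exact inv_eq_of_mul_eq_one_left (G := F2 Fq) hmul

lemma IwAux.t2_zpow (n : ℤ) : t2 Fq ^ n = HahnSeries.single n (1 : LaurentSeries Fq) := by
  have h : t2 Fq = HahnSeries.single (1 : ℤ) (1 : LaurentSeries Fq) := rfl
  rw [h, IwAux.single_zpow]

lemma IwAux.pi_eq (i j : ℤ) :
    t1 Fq ^ i * t2 Fq ^ j = HahnSeries.single j (HahnSeries.single i 1) := by
  rw [IwAux.t1_zpow, IwAux.t2_zpow, HahnSeries.single_mul_single, mul_one, zero_add]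

lemma IwAux.pi_ne_zero (i j : ℤ) : t1 Fq ^ i * t2 Fq ^ j ≠ 0 := by
  rw [IwAux.pi_eq]
  exact HahnSeries.single_ne_zero (HahnSeries.single_ne_zero one_ne_zero)

lemma IwAux.vv_pi (i j : ℤ) : vv Fq (t1 Fq ^ i * t2 Fq ^ j) = (i, j) := by
  rw [IwAux.pi_eq]
  unfold vv
  rw [HahnSeries.order_single (HahnSeries.single_ne_zero one_ne_zero),
    HahnSeries.coeff_single_same, HahnSeries.order_single one_ne_zero]

lemma IwAux.vv_t1 : vv Fq (t1 Fq) = (1, 0) := by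
  rw [show t1 Fq = HahnSeries.single (0:ℤ) (HahnSeries.single (1:ℤ) (1:Fq)) from rfl]
  unfold vv
  rw [HahnSeries.order_single (HahnSeries.single_ne_zero one_ne_zero),
    HahnSeries.coeff_single_same, HahnSeries.order_single one_ne_zero]

lemma IwAux.zero_memO : (0 : F2 Fq) ∈ Oring Fq := Or.inl rfl

lemma IwAux.one_memO : (1 : F2 Fq) ∈ Oring Fq :=
  Or.inr (by rw [IwAux.vv_one]; exact Or.inr ⟨rfl, le_rfl⟩)

lemma IwAux.lexle_add {p q : ℤ × ℤ} (hp : lexle (0, 0) p) (hq : lexle (0, 0) q) :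
    lexle (0, 0) (p + q) := by
  obtain ⟨p1, p2⟩ := p
  obtain ⟨q1, q2⟩ := q
  simp only [lexle, Prod.mk_add_mk] at *
  omega

lemma IwAux.mul_memO {x y : F2 Fq} (hx : x ∈ Oring Fq) (hy : y ∈ Oring Fq) :
    x * y ∈ Oring Fq := by
  by_cases hx0 : x = 0
  · exact Or.inl (mul_eq_zero_of_left hx0 y)
  by_cases hy0 : y = 0
  · exact Or.inl (mul_eq_zero_of_right x hy0)
  rcases hx with rfl | hx
  · exact absurd rfl hx0
  rcases hy with rfl | hy
  · exact absurd rfl hy0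
  exact Or.inr (by rw [IwAux.vv_mul Fq hx0 hy0]; exact IwAux.lexle_add hx hy)

lemma IwAux.neg_memO {x : F2 Fq} (hx : x ∈ Oring Fq) : -x ∈ Oring Fq := by
  rcases hx with rfl | hx
  · refine Or.inl ?_
    ext n
    rw [HahnSeries.coeff_neg, HahnSeries.coeff_zero]
    exact neg_zero
  · exact Or.inr (by rw [IwAux.vv_neg]; exact hx)

lemma IwAux.memO_iff {x : F2 Fq} : x ∈ Oring Fq ↔
    (∀ n < (0 : ℤ), x.coeff n = 0) ∧ (∀ m < (0 : ℤ), (x.coeff 0).coeff m = 0) := by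
  constructor
  · rintro (rfl | h)
    · simp
    simp only [lexle, vv] at h
    rcases h with h | ⟨h1, h2⟩
    · refine ⟨fun n hn => HahnSeries.coeff_eq_zero_of_lt_order (hn.trans h), ?_⟩
      have h0 : x.coeff 0 = 0 := HahnSeries.coeff_eq_zero_of_lt_order h
      simp [h0]
    · have e : x.coeff (0 : ℤ) = x.coeff x.order := congrArg x.coeff h1
      refine ⟨fun n hn => HahnSeries.coeff_eq_zero_of_lt_order (h1 ▸ hn),
        fun m hm => ?_⟩
      rw [e]
      exact HahnSeries.coeff_eq_zero_of_lt_order (lt_of_lt_of_le hm h2)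
  · rintro ⟨h1, h2⟩
    by_cases hx : x = 0
    · exact Or.inl hx
    right
    have ho : 0 ≤ x.order := IwAux.order_nonneg hx h1
    simp only [lexle, vv]
    rcases lt_or_eq_of_le ho with h | h
    · exact Or.inl h
    · refine Or.inr ⟨h, ?_⟩
      have e : x.coeff x.order = x.coeff 0 := congrArg x.coeff h.symm
      have hne : x.coeff (0 : ℤ) ≠ 0 := e ▸ IwAux.coeff_order_ne_zero hx
      rw [e]
      exact IwAux.order_nonneg hne h2

lemma IwAux.add_memO {x y : F2 Fq} (hx : x ∈ Oring Fq) (hy : y ∈ Oring Fq) :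
    x + y ∈ Oring Fq := by
  rw [IwAux.memO_iff] at *
  obtain ⟨hx1, hx2⟩ := hx
  obtain ⟨hy1, hy2⟩ := hy
  exact ⟨fun n hn => by rw [HahnSeries.coeff_add, hx1 n hn, hy1 n hn, add_zero],
    fun m hm => by rw [HahnSeries.coeff_add, HahnSeries.coeff_add, hx2 m hm, hy2 m hm, add_zero]⟩

end Aux2
section Aux3

variable (Fq : Type) [Field Fq] [Fintype Fq]

set_option maxHeartbeats 1000000
set_option linter.unusedSectionVars false

lemma IwAux.vv_one_add {z : F2 Fq} (hz : z = 0 ∨ lexlt (0, 0) (vv Fq z)) :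
    1 + z ≠ 0 ∧ vv Fq (1 + z) = (0, 0) := by
  rcases hz with rfl | hz
  · obtain ⟨hne, _, _⟩ := IwAux.one_add_aux (w := (0 : F2 Fq))
      (fun n _ => HahnSeries.coeff_zero)
    exact ⟨hne, by rw [add_zero]; exact IwAux.vv_one Fq⟩
  simp only [lexlt, vv] at hz
  rcases hz with h | ⟨h1, h2⟩
  · have hw : ∀ n ≤ (0 : ℤ), z.coeff n = 0 :=
      fun n hn => HahnSeries.coeff_eq_zero_of_lt_order (lt_of_le_of_lt hn h)
    obtain ⟨hne, ho, hc⟩ := IwAux.one_add_aux hw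
    refine ⟨hne, ?_⟩
    unfold vv
    rw [ho, hc, HahnSeries.order_one]
  · have e : z.coeff z.order = z.coeff 0 := congrArg z.coeff h1.symm
    rw [e] at h2
    have hwc : ∀ m ≤ (0 : ℤ), (z.coeff 0).coeff m = 0 :=
      fun m hm => HahnSeries.coeff_eq_zero_of_lt_order (lt_of_le_of_lt hm h2)
    obtain ⟨hwne, hwo, _⟩ := IwAux.one_add_aux hwc
    have hc0 : (1 + z).coeff 0 = 1 + z.coeff 0 := by
      rw [HahnSeries.coeff_add, IwAux.one_coeff_zero]
    have hne : (1 + z) ≠ 0 := by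
      intro hcontra
      apply hwne
      rw [← hc0, hcontra, HahnSeries.coeff_zero]
    have hordle : (1 + z).order ≤ 0 :=
      HahnSeries.order_le_of_coeff_ne_zero (by rw [hc0]; exact hwne)
    have hordge : 0 ≤ (1 + z).order := by
      refine IwAux.order_nonneg hne fun n hn => ?_
      rw [HahnSeries.coeff_add, IwAux.one_coeff_ne hn.ne,
        HahnSeries.coeff_eq_zero_of_lt_order (h1 ▸ hn), add_zero]
    have hord : (1 + z).order = 0 := le_antisymm hordle hordge
    refine ⟨hne, ?_⟩
    unfold vv
    rw [hord, hc0, hwo]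

lemma IwAux.unit_d {a d z : F2 Fq} (ha : a ∈ Oring Fq) (hd : d ∈ Oring Fq)
    (hz : z = 0 ∨ lexlt (0, 0) (vv Fq z)) (heq : a * d = 1 + z) :
    d ≠ 0 ∧ d⁻¹ ∈ Oring Fq := by
  obtain ⟨hne, hvv⟩ := IwAux.vv_one_add Fq hz
  rw [← heq] at hne hvv
  have hd0 : d ≠ 0 := fun h => hne (mul_eq_zero_of_right a h)
  have ha0 : a ≠ 0 := fun h => hne (mul_eq_zero_of_left h d)
  have hsum : vv Fq a + vv Fq d = (0, 0) := by rw [← IwAux.vv_mul Fq ha0 hd0, hvv]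
  have hva : lexle (0, 0) (vv Fq a) := ha.resolve_left ha0
  have hvd : lexle (0, 0) (vv Fq d) := hd.resolve_left hd0
  have e1 : (vv Fq a).1 + (vv Fq d).1 = 0 := by
    have := congrArg Prod.fst hsum
    simpa using this
  have e2 : (vv Fq a).2 + (vv Fq d).2 = 0 := by
    have := congrArg Prod.snd hsum
    simpa using this
  simp only [lexle] at hva hvd
  have hvd0 : vv Fq d = (0, 0) := Prod.ext_iff.mpr ⟨by omega, by omega⟩
  have hdinv : d⁻¹ ≠ 0 := inv_ne_zero (G₀ := F2 Fq) hd0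
  have hmi : d * d⁻¹ = 1 := mul_inv_cancel₀ (G₀ := F2 Fq) hd0
  have hs2 : vv Fq d + vv Fq d⁻¹ = (0, 0) := by
    rw [← IwAux.vv_mul Fq hd0 hdinv, hmi, IwAux.vv_one]
  have g1 : (vv Fq d).1 + (vv Fq d⁻¹).1 = 0 := by
    have := congrArg Prod.fst hs2
    simpa using this
  have g2 : (vv Fq d).2 + (vv Fq d⁻¹).2 = 0 := by
    have := congrArg Prod.snd hs2
    simpa using this
  refine ⟨hd0, Or.inr ?_⟩
  simp only [lexle]
  omega

lemma IwAux.Iwahori_one_mem : (1 : Matrix (Fin 2) (Fin 2) (F2 Fq)) ∈ Iwahori Fq := by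
  refine ⟨Matrix.det_one, ?_, 0, IwAux.zero_memO Fq, ?_⟩
  · intro i' j'
    rw [Matrix.one_apply]
    split_ifs
    · exact IwAux.one_memO Fq
    · exact IwAux.zero_memO Fq
  · rw [Matrix.one_apply_ne (by decide)]
    exact (mul_zero (M₀ := F2 Fq) (t1 Fq)).symm

lemma IwAux.Iwahori_mul_mem {g h : Matrix (Fin 2) (Fin 2) (F2 Fq)}
    (hg : g ∈ Iwahori Fq) (hh : h ∈ Iwahori Fq) : g * h ∈ Iwahori Fq := by
  obtain ⟨hg1, hg2, yg, hyg, hcg⟩ := hg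
  obtain ⟨hh1, hh2, yh, hyh, hch⟩ := hh
  refine ⟨by rw [Matrix.det_mul, hg1, hh1]; exact one_mul (1 : F2 Fq), ?_,
    yg * h 0 0 + g 1 1 * yh,
    IwAux.add_memO Fq (IwAux.mul_memO Fq hyg (hh2 0 0)) (IwAux.mul_memO Fq (hg2 1 1) hyh), ?_⟩
  · intro i' j'
    rw [Matrix.mul_apply, Fin.sum_univ_two]
    exact IwAux.add_memO Fq (IwAux.mul_memO Fq (hg2 i' 0) (hh2 0 j'))
      (IwAux.mul_memO Fq (hg2 i' 1) (hh2 1 j'))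
  · rw [Matrix.mul_apply, Fin.sum_univ_two, hcg, hch]
    ring

end Aux3
section Aux4

variable (Fq : Type) [Field Fq] [Fintype Fq]

set_option maxHeartbeats 2000000
set_option linter.unusedSectionVars false

lemma IwAux.zpow_mul_zpow_neg (x : F2 Fq) (hx : x ≠ 0) (n : ℤ) :
    x ^ n * x ^ (-n) = 1 := by
  have h := (zpow_add₀ (G₀ := F2 Fq) hx n (-n)).symm
  rw [show n + -n = 0 from by ring] at h
  rw [zpow_zero] at h
  exact h

lemma IwAux.memO_pi {i j : ℤ} (hij : lexle (0, 0) (i, j)) :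
    t1 Fq ^ i * t2 Fq ^ j ∈ Oring Fq :=
  Or.inr (by rw [IwAux.vv_pi]; exact hij)

lemma IwAux.eta2_add (i j k l : ℤ) :
    eta2 Fq (i + k) (j + l) =
      !![0, t1 Fq ^ i * t1 Fq ^ k * (t2 Fq ^ j * t2 Fq ^ l);
         -(t1 Fq ^ (-i) * t1 Fq ^ (-k) * (t2 Fq ^ (-j) * t2 Fq ^ (-l))), 0] := by
  have ht1 : t1 Fq ≠ 0 := IwAux.t1_ne_zero Fq
  have ht2 : t2 Fq ≠ 0 := IwAux.t2_ne_zero Fq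
  have a1 : t1 Fq ^ (i + k) = t1 Fq ^ i * t1 Fq ^ k := zpow_add₀ (G₀ := F2 Fq) ht1 i k
  have a2 : t2 Fq ^ (j + l) = t2 Fq ^ j * t2 Fq ^ l := zpow_add₀ (G₀ := F2 Fq) ht2 j l
  have a3 : t1 Fq ^ (-(i + k)) = t1 Fq ^ (-i) * t1 Fq ^ (-k) := by
    rw [show -(i + k) = -i + -k from by ring]
    exact zpow_add₀ (G₀ := F2 Fq) ht1 (-i) (-k)
  have a4 : t2 Fq ^ (-(j + l)) = t2 Fq ^ (-j) * t2 Fq ^ (-l) := by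
    rw [show -(j + l) = -j + -l from by ring]
    exact zpow_add₀ (G₀ := F2 Fq) ht2 (-j) (-l)
  unfold eta2
  rw [a1, a2, a3, a4]

lemma IwAux.key (i j k l : ℤ) (hij : lexle (0, 0) (i, j)) (hkl : lexle (0, 0) (k, l))
    (h : Matrix (Fin 2) (Fin 2) (F2 Fq)) (hh : h ∈ Iwahori Fq) :
    eta1 Fq i j * h * eta2 Fq k l ∈ doubleCoset Fq (eta2 Fq (i + k) (j + l)) := by
  obtain ⟨hdet, hO, y, hyO, hc⟩ := hh
  rw [Matrix.det_fin_two] at hdet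
  have had : h 0 0 * h 1 1 = 1 + h 0 1 * h 1 0 := eq_add_of_sub_eq hdet
  have ht1 : t1 Fq ≠ 0 := IwAux.t1_ne_zero Fq
  have ht2 : t2 Fq ≠ 0 := IwAux.t2_ne_zero Fq
  -- the lower-left product has strictly positive valuation
  have hzz : h 0 1 * h 1 0 = 0 ∨ lexlt (0, 0) (vv Fq (h 0 1 * h 1 0)) := by
    by_cases hb : h 0 1 = 0
    · exact Or.inl (mul_eq_zero_of_left hb _)
    by_cases hy0 : y = 0
    · have hcz : h 1 0 = 0 := by
        rw [hc, hy0]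
        exact mul_zero (M₀ := F2 Fq) (t1 Fq)
      exact Or.inl (mul_eq_zero_of_right _ hcz)
    right
    have hty : t1 Fq * y ≠ 0 := mul_ne_zero (M₀ := F2 Fq) ht1 hy0
    have hvv1 : vv Fq (h 0 1 * (t1 Fq * y)) = vv Fq (h 0 1) + (vv Fq (t1 Fq) + vv Fq y) := by
      rw [IwAux.vv_mul Fq hb hty, IwAux.vv_mul Fq ht1 hy0]
    rw [hc, hvv1, IwAux.vv_t1]
    have hvb : lexle (0, 0) (vv Fq (h 0 1)) := (hO 0 1).resolve_left hb
    have hvy : lexle (0, 0) (vv Fq y) := hyO.resolve_left hy0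
    simp only [lexle, lexlt, Prod.fst_add, Prod.snd_add] at hvb hvy ⊢
    omega
  obtain ⟨hd0, hdinv⟩ := IwAux.unit_d Fq (hO 0 0) (hO 1 1) hzz had
  -- the two Iwahori factors
  refine ⟨!![(h 1 1)⁻¹, t1 Fq ^ i * t2 Fq ^ j * (t1 Fq ^ i * t2 Fq ^ j) * h 0 1; 0, h 1 1], ?_,
    !![1, -(t1 Fq ^ k * t2 Fq ^ l * (t1 Fq ^ k * t2 Fq ^ l) * (h 1 0 * (h 1 1)⁻¹)); 0, 1], ?_, ?_⟩
  · refine ⟨?_, ?_, 0, IwAux.zero_memO Fq, ?_⟩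
    · exact IwAux.det_aux _ _ _ (inv_mul_cancel₀ (G₀ := F2 Fq) hd0)
    · intro i' j'
      fin_cases i' <;> fin_cases j'
      · exact hdinv
      · exact IwAux.mul_memO Fq (IwAux.mul_memO Fq (IwAux.memO_pi Fq hij) (IwAux.memO_pi Fq hij)) (hO 0 1)
      · exact IwAux.zero_memO Fq
      · exact hO 1 1
    · exact (mul_zero (M₀ := F2 Fq) (t1 Fq)).symm
  · refine ⟨?_, ?_, 0, IwAux.zero_memO Fq, ?_⟩
    · exact IwAux.det_aux _ _ _ (one_mul (1 : F2 Fq))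
    · intro i' j'
      fin_cases i' <;> fin_cases j'
      · exact IwAux.one_memO Fq
      · exact IwAux.neg_memO Fq (IwAux.mul_memO Fq
          (IwAux.mul_memO Fq (IwAux.memO_pi Fq hkl) (IwAux.memO_pi Fq hkl))
          (IwAux.mul_memO Fq (hO 1 0) hdinv))
      · exact IwAux.zero_memO Fq
      · exact IwAux.one_memO Fq
    · exact (mul_zero (M₀ := F2 Fq) (t1 Fq)).symm
  · -- the matrix identity
    rw [IwAux.eta2_add Fq i j k l, Matrix.eta_fin_two h]
    unfold eta1 eta2
    exact IwAux.gen_id (t1 Fq ^ i) (t2 Fq ^ j) (t1 Fq ^ (-i)) (t2 Fq ^ (-j))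
      (t1 Fq ^ k) (t2 Fq ^ l) (t1 Fq ^ (-k)) (t2 Fq ^ (-l))
      (h 0 0) (h 0 1) (h 1 0) (h 1 1) ((h 1 1)⁻¹)
      (IwAux.zpow_mul_zpow_neg Fq _ ht1 i) (IwAux.zpow_mul_zpow_neg Fq _ ht2 j)
      (IwAux.zpow_mul_zpow_neg Fq _ ht1 k) (IwAux.zpow_mul_zpow_neg Fq _ ht2 l)
      (mul_inv_cancel₀ (G₀ := F2 Fq) hd0) hdet

lemma IwAux.eta_mul (i j k l : ℤ) :
    eta1 Fq i j * eta2 Fq k l = eta2 Fq (i + k) (j + l) := by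
  rw [IwAux.eta2_add Fq i j k l]
  unfold eta1 eta2
  exact IwAux.gen_id2 (t1 Fq ^ i) (t2 Fq ^ j) (t1 Fq ^ (-i)) (t2 Fq ^ (-j))
    (t1 Fq ^ k) (t2 Fq ^ l) (t1 Fq ^ (-k)) (t2 Fq ^ (-l))

end Aux4

set_option maxHeartbeats 2000000

open Pointwise in
/-- For `(i,j) ≥ (0,0)` and `(k,l) ≥ (0,0)`:
`(I·η^{(1)}_{i,j}·I)·(I·η^{(2)}_{k,l}·I) = I·η^{(2)}_{i+k,j+l}·I`. -/
theorem product_diag_antidiag (Fq : Type) [Field Fq] [Fintype Fq] (i j k l : ℤ)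
    (hij : lexle (0, 0) (i, j)) (hkl : lexle (0, 0) (k, l)) :
    doubleCoset Fq (eta1 Fq i j) * doubleCoset Fq (eta2 Fq k l) =
      doubleCoset Fq (eta2 Fq (i + k) (j + l)) := by
  ext x
  simp only [Set.mem_mul]
  constructor
  · rintro ⟨p, hp, q, hq, rfl⟩
    obtain ⟨g1, hg1, h1, hh1, rfl⟩ := hp
    obtain ⟨g2, hg2, h2, hh2, rfl⟩ := hq
    obtain ⟨A, hA, B, hB, hEq⟩ :=
      IwAux.key Fq i j k l hij hkl (h1 * g2) (IwAux.Iwahori_mul_mem Fq hh1 hg2)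
    exact ⟨g1 * A, IwAux.Iwahori_mul_mem Fq hg1 hA,
      B * h2, IwAux.Iwahori_mul_mem Fq hB hh2,
      IwAux.regroup g1 (eta1 Fq i j) h1 g2 (eta2 Fq k l) h2 A (eta2 Fq (i + k) (j + l)) B hEq⟩
  · rintro ⟨g, hg, h, hh, rfl⟩
    refine ⟨g * eta1 Fq i j * 1, ⟨g, hg, 1, IwAux.Iwahori_one_mem Fq, rfl⟩,
      1 * eta2 Fq k l * h, ⟨1, IwAux.Iwahori_one_mem Fq, h, hh, rfl⟩, ?_⟩
    exact IwAux.regroup2 g (eta1 Fq i j) (eta2 Fq k l) h _ (IwAux.eta_mul Fq i j k l)
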